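/- arXiv:1708.05502 — 3 statements merged into one kernel-verified Lean document; each statement's English description precedes it below -/
import Mathlib

section
/- Let 0 < α < 1, n ≥ 1 a natural number, and T : [0,∞) → ℝ be (n+1)-times continuously differentiable. Define (CF D^{α+n} T)(t) = (1/(1-α)) ∫₀ᵗ T^{(n+1)}(s) e^{-(α/(1-α))(t-s)} ds. Then (CF D^{α+n} T)(t) = (1/(1-α)) [ Σ_{i=0}^{n} (-α/(1-α))^i ( T^{(n-i)}(t) - T^{(n-i)}(0) e^{-(α/(1-α)) t} ) + (-α/(1-α))^{n+1} ∫₀ᵗ T(s) e^{-(α/(1-α))(t-s)} ds ] for all t ≥ 0. -/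
/-! Since `∂ₛ exp (-k (t - s)) = k exp (-k (t - s))`, one integration by parts against this
kernel trades `T⁽ᵐ⁾` for `T⁽ᵐ⁻¹⁾` at the cost of a boundary term and a factor `-k`; iterating
`n + 1` times brings the integrand down to `T` itself. -/

open Real Set MeasureTheory intervalIntegral

theorem integral_deriv_mul_exp_sub {g g' : ℝ → ℝ} {a t : ℝ} (k : ℝ)
    (hg : ∀ s ∈ uIcc a t, HasDerivAt g (g' s) s) (hg' : IntervalIntegrable g' volume a t) :
    ∫ s in a..t, g' s * exp (-k * (t - s))
      = g t - g a * exp (-k * (t - a)) + -k * ∫ s in a..t, g s * exp (-k * (t - s)) := by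
  have hexp (s : ℝ) : HasDerivAt (fun s => exp (-k * (t - s))) (k * exp (-k * (t - s))) s := by
    convert (((hasDerivAt_id' s).const_sub t).const_mul (-k)).exp using 1
    ring
  have hparts := integral_mul_deriv_eq_deriv_mul (fun s _ => hexp s) hg
    ((by fun_prop : Continuous fun s => k * exp (-k * (t - s))).intervalIntegrable _ _) hg'
  simp only [sub_self, mul_zero, exp_zero, one_mul] at hparts
  simp_rw [mul_comm (g' _), hparts, mul_assoc k, intervalIntegral.integral_const_mul,
    mul_comm (exp _) (g _)]
  ring

theorem integral_iteratedDeriv_mul_exp_sub {T : ℝ → ℝ} {m : ℕ} (hT : ContDiff ℝ m T)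
    (k a t : ℝ) :
    ∫ s in a..t, iteratedDeriv m T s * exp (-k * (t - s))
      = ∑ i ∈ Finset.range m, (-k) ^ i *
          (iteratedDeriv (m - (i + 1)) T t - iteratedDeriv (m - (i + 1)) T a * exp (-k * (t - a)))
        + (-k) ^ m * ∫ s in a..t, T s * exp (-k * (t - s)) := by
  induction m with
  | zero => simp
  | succ m ih =>
    have hderiv (s : ℝ) : HasDerivAt (iteratedDeriv m T) (iteratedDeriv (m + 1) T s) s := by
      rw [iteratedDeriv_succ]
      exact (hT.differentiable_iteratedDeriv m (by norm_cast; omega) s).hasDerivAt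
    have hint : IntervalIntegrable (iteratedDeriv (m + 1) T) volume a t :=
      (hT.continuous_iteratedDeriv (m + 1) le_rfl).intervalIntegrable a t
    rw [integral_deriv_mul_exp_sub k (fun s _ => hderiv s) hint,
      ih (hT.of_le (by norm_cast; omega)), Finset.sum_range_succ']
    simp only [Nat.add_sub_add_right, pow_succ', mul_assoc, ← Finset.mul_sum, pow_zero, one_mul,
      zero_add, Nat.add_sub_cancel]
    ring

theorem cf_higher_order_formula_general (α : ℝ)
    (n : ℕ) (T : ℝ → ℝ) (hT : ContDiff ℝ (n + 1) T) :
    ∀ t : ℝ, 0 ≤ t →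
      (1 / (1 - α)) * ∫ s in (0:ℝ)..t, iteratedDeriv (n + 1) T s * Real.exp (-(α / (1 - α)) * (t - s))
        = (1 / (1 - α)) *
          ((∑ i ∈ Finset.range (n + 1), (-(α / (1 - α))) ^ i *
              (iteratedDeriv (n - i) T t - iteratedDeriv (n - i) T 0 * Real.exp (-(α / (1 - α)) * t)))
            + (-(α / (1 - α))) ^ (n + 1) *
              ∫ s in (0:ℝ)..t, T s * Real.exp (-(α / (1 - α)) * (t - s))) := by
  intro t _
  rw [integral_iteratedDeriv_mul_exp_sub (m := n + 1) (by exact_mod_cast hT) (α / (1 - α)) 0 t]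
  simp only [Nat.add_sub_add_right, sub_zero]

theorem cf_higher_order_formula (α : ℝ) (hα0 : 0 < α) (hα1 : α < 1)
    (n : ℕ) (hn : 1 ≤ n) (T : ℝ → ℝ) (hT : ContDiff ℝ (n + 1) T) :
    ∀ t : ℝ, 0 ≤ t →
      (1 / (1 - α)) * ∫ s in (0:ℝ)..t, iteratedDeriv (n + 1) T s * Real.exp (-(α / (1 - α)) * (t - s))
        = (1 / (1 - α)) *
          ((∑ i ∈ Finset.range (n + 1), (-(α / (1 - α))) ^ i *
              (iteratedDeriv (n - i) T t - iteratedDeriv (n - i) T 0 * Real.exp (-(α / (1 - α)) * t)))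
            + (-(α / (1 - α))) ^ (n + 1) *
              ∫ s in (0:ℝ)..t, T s * Real.exp (-(α / (1 - α)) * (t - s))) :=
  cf_higher_order_formula_general α n T hT
end

section
/- Let 0 < α < 1, m ∈ ℕ₊, and λ₂ ≠ 0, λ₁, λ₀ real. Suppose T : [0,∞) → ℝ is four times continuously differentiable, f_m : [0,∞) → ℝ is continuously differentiable, T(0) = T'(0) = T''(0) = 0, and T satisfies Σ_{n=0}^{2} λ_n (CF D^{α+n} T)(t) + (mπ)² T(t) = f_m(t) for all t ≥ 0, where CF D^{α+n} denotes the Caputo–Fabrizio derivative of order α+n based at 0. Then T̃(t) = T(t) e^{(α/(1-α)) t} satisfies the third-order linear ODE T̃'''(t) + A₁ T̃''(t) + A₂ T̃'(t) + A₃ T̃(t) = g_m(t), where A₁ = -3α/(1-α) + λ₁/λ₂, A₂ = 3(α/(1-α))² + (λ₀ - 2αλ₁/(1-α) + (mπ)²(1-α))/λ₂, A₃ = -(α/(1-α))³ + ((α/(1-α))² λ₁ - (α/(1-α)) λ₀)/λ₂, and g_m(t) = (1/λ₂) [α f_m(t) + (1-α) f_m'(t)] e^{(α/(1-α)) t}.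 -/
/-!
Put `k = α / (1 - α)`. Because the kernel of each Caputo–Fabrizio derivative is
`exp (-k (t - s))`, `C = CF D^{α+n} T` satisfies `(1 - α) C' + α C = T^{(n+1)}`. Applying
`(1 - α) D + α` to the relation (which holds on `[0, ∞)`, so at `t = 0` one differentiates within
`[0, ∞)`) removes every integral and leaves
`λ₂ T''' + λ₁ T'' + λ₀ T' + (mπ)² ((1 - α) T' + α T) = α f + (1 - α) f'`.
By Leibniz, `T̃^{(n)} = e^{kt} Σ C(n,i) k^{n-i} T^{(i)}`, and substituting these expansions into
the claimed ODE for `T̃` returns exactly `e^{kt} / λ₂` times this identity.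
-/

open Real

theorem integral_mul_exp_neg_mul_sub (g : ℝ → ℝ) (k t : ℝ) :
    ∫ s in (0:ℝ)..t, g s * exp (-k * (t - s))
      = exp (-k * t) * ∫ s in (0:ℝ)..t, g s * exp (k * s) := by
  rw [← intervalIntegral.integral_const_mul]
  refine intervalIntegral.integral_congr fun s _ => ?_
  rw [show -k * (t - s) = -k * t + k * s by ring, exp_add]
  ring

theorem hasDerivAt_integral_mul_exp_neg_mul_sub {g : ℝ → ℝ} (hg : Continuous g) (k t : ℝ) :
    HasDerivAt (fun t => ∫ s in (0:ℝ)..t, g s * exp (-k * (t - s)))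
      (g t - k * ∫ s in (0:ℝ)..t, g s * exp (-k * (t - s))) t := by
  simp only [integral_mul_exp_neg_mul_sub]
  have hexp : HasDerivAt (fun t => exp (-k * t)) (exp (-k * t) * -k) t := by
    simpa using ((hasDerivAt_id t).const_mul (-k)).exp
  have hint : HasDerivAt (fun t => ∫ s in (0:ℝ)..t, g s * exp (k * s)) (g t * exp (k * t)) t :=
    ((hg.mul (by fun_prop)).integral_hasStrictDerivAt 0 t).hasDerivAt
  refine (hexp.mul hint).congr_deriv ?_
  rw [mul_left_comm (exp (-k * t)), ← exp_add, show -k * t + k * t = 0 by ring, exp_zero]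
  ring

theorem iteratedDeriv_mul_exp_const_mul {n : ℕ} {u : ℝ → ℝ} {x : ℝ} (k : ℝ)
    (hu : ContDiffAt ℝ n u x) :
    iteratedDeriv n (fun s => u s * exp (k * s)) x
      = (∑ i ∈ Finset.range (n + 1), n.choose i * k ^ (n - i) * iteratedDeriv i u x)
          * exp (k * x) := by
  rw [iteratedDeriv_fun_mul hu (by fun_prop), Finset.sum_mul]
  refine Finset.sum_congr rfl fun i _ => ?_
  rw [iteratedDeriv_exp_const_mul]
  ring

theorem HasDerivAt.eq_zero_of_eqOn_Ici {f : ℝ → ℝ} {f' a x : ℝ} (hf : HasDerivAt f f' x)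
    (h : Set.EqOn f 0 (Set.Ici a)) (hx : a ≤ x) : f' = 0 :=
  (uniqueDiffOn_Ici a x hx).eq_deriv _ hf.hasDerivWithinAt
    ((hasDerivWithinAt_const x _ 0).congr (fun _ hy => h hy) (h hx))

/-- The paper's `CF D^{α+n} u`, based at `0`. -/
noncomputable def caputoFabrizioDeriv (α : ℝ) (n : ℕ) (u : ℝ → ℝ) (t : ℝ) : ℝ :=
  (1 / (1 - α)) * ∫ s in (0:ℝ)..t, iteratedDeriv (n + 1) u s * exp (-(α / (1 - α)) * (t - s))

theorem hasDerivAt_caputoFabrizioDeriv (α : ℝ) {n : ℕ} {u : ℝ → ℝ}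
    (hu : Continuous (iteratedDeriv (n + 1) u)) (t : ℝ) :
    HasDerivAt (caputoFabrizioDeriv α n u)
      ((iteratedDeriv (n + 1) u t - α * caputoFabrizioDeriv α n u t) / (1 - α)) t := by
  refine ((hasDerivAt_integral_mul_exp_neg_mul_sub hu _ t).const_mul
    (1 / (1 - α))).congr_deriv ?_
  simp only [caputoFabrizioDeriv]
  ring

theorem caputoFabrizio_relation_deriv {α c lam0 lam1 lam2 t : ℝ} {T f : ℝ → ℝ} (hα : α ≠ 1)
    (hT : ContDiff ℝ 3 T) (hf : DifferentiableAt ℝ f t)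
    (heq : ∀ t, 0 ≤ t → lam0 * caputoFabrizioDeriv α 0 T t + lam1 * caputoFabrizioDeriv α 1 T t
      + lam2 * caputoFabrizioDeriv α 2 T t + c * T t = f t) (ht : 0 ≤ t) :
    lam2 * iteratedDeriv 3 T t + lam1 * iteratedDeriv 2 T t + lam0 * iteratedDeriv 1 T t
      + c * ((1 - α) * iteratedDeriv 1 T t + α * T t) = α * f t + (1 - α) * deriv f t := by
  have hcont (j : ℕ) (hj : j ≤ 3) : Continuous (iteratedDeriv j T) :=
    hT.continuous_iteratedDeriv j (by exact_mod_cast hj)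
  have hTt : HasDerivAt T (iteratedDeriv 1 T t) t := by
    rw [iteratedDeriv_one]
    exact (hT.differentiable (by norm_num) t).hasDerivAt
  have hCF (n : ℕ) (hn : n + 1 ≤ 3) := hasDerivAt_caputoFabrizioDeriv α (hcont (n + 1) hn) t
  have hderiv := (((((hCF 0 (by norm_num)).const_mul lam0).add
    ((hCF 1 (by norm_num)).const_mul lam1)).add ((hCF 2 (by norm_num)).const_mul lam2)).add
    (hTt.const_mul c)).sub hf.hasDerivAt
  have hzero := hderiv.eq_zero_of_eqOn_Ici (a := 0) (fun s hs => sub_eq_zero.2 (heq s hs)) ht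
  have h1α : 1 - α ≠ 0 := sub_ne_zero.2 hα.symm
  field_simp at hzero
  linear_combination hzero + α * (heq t ht)

theorem cf_three_term_reduction_general (α : ℝ) (hα1 : α < 1)
    (m : ℕ) (lam0 lam1 lam2 : ℝ) (hlam2 : lam2 ≠ 0)
    (T fm : ℝ → ℝ) (hT : ContDiff ℝ 4 T) (hf : ContDiff ℝ 1 fm)
    (heq : ∀ t : ℝ, 0 ≤ t →
      lam0 * ((1 / (1 - α)) * ∫ s in (0:ℝ)..t, iteratedDeriv 1 T s * Real.exp (-(α / (1 - α)) * (t - s)))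
        + lam1 * ((1 / (1 - α)) * ∫ s in (0:ℝ)..t, iteratedDeriv 2 T s * Real.exp (-(α / (1 - α)) * (t - s)))
        + lam2 * ((1 / (1 - α)) * ∫ s in (0:ℝ)..t, iteratedDeriv 3 T s * Real.exp (-(α / (1 - α)) * (t - s)))
        + ((m : ℝ) * π) ^ 2 * T t = fm t) :
    ∀ t : ℝ, 0 ≤ t →
      iteratedDeriv 3 (fun s => T s * Real.exp ((α / (1 - α)) * s)) t
        + (-3 * α / (1 - α) + lam1 / lam2) *
            iteratedDeriv 2 (fun s => T s * Real.exp ((α / (1 - α)) * s)) t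
        + (3 * (α / (1 - α)) ^ 2 +
            (lam0 - 2 * α * lam1 / (1 - α) + ((m : ℝ) * π) ^ 2 * (1 - α)) / lam2) *
            deriv (fun s => T s * Real.exp ((α / (1 - α)) * s)) t
        + (-(α / (1 - α)) ^ 3 +
            ((α / (1 - α)) ^ 2 * lam1 - (α / (1 - α)) * lam0) / lam2) *
            (T t * Real.exp ((α / (1 - α)) * t))
        = (1 / lam2) * (α * fm t + (1 - α) * deriv fm t) * Real.exp ((α / (1 - α)) * t) := by
  intro t ht
  have hT3 : ContDiff ℝ 3 T := hT.of_le (by norm_num)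
  have hrel := caputoFabrizio_relation_deriv hα1.ne hT3 (hf.differentiable one_ne_zero t) heq ht
  have hTt (n : ℕ) (hn : n ≤ 3) : ContDiffAt ℝ n T t :=
    (hT3.of_le (by exact_mod_cast hn)).contDiffAt
  rw [← iteratedDeriv_one, iteratedDeriv_mul_exp_const_mul _ (hTt 1 (by norm_num)),
    iteratedDeriv_mul_exp_const_mul _ (hTt 2 (by norm_num)),
    iteratedDeriv_mul_exp_const_mul _ (hTt 3 (by norm_num))]
  norm_num [Finset.sum_range_succ, Nat.choose] at hrel ⊢
  have h1α : 1 - α ≠ 0 := (sub_pos.2 hα1).ne'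
  field_simp
  linear_combination (1 - α) ^ 3 * hrel

theorem cf_three_term_reduction (α : ℝ) (hα0 : 0 < α) (hα1 : α < 1)
    (m : ℕ) (hm : 0 < m) (lam0 lam1 lam2 : ℝ) (hlam2 : lam2 ≠ 0)
    (T fm : ℝ → ℝ) (hT : ContDiff ℝ 4 T) (hf : ContDiff ℝ 1 fm)
    (hT0 : T 0 = 0) (hT1 : deriv T 0 = 0) (hT2 : iteratedDeriv 2 T 0 = 0)
    (heq : ∀ t : ℝ, 0 ≤ t →
      lam0 * ((1 / (1 - α)) * ∫ s in (0:ℝ)..t, iteratedDeriv 1 T s * Real.exp (-(α / (1 - α)) * (t - s)))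
        + lam1 * ((1 / (1 - α)) * ∫ s in (0:ℝ)..t, iteratedDeriv 2 T s * Real.exp (-(α / (1 - α)) * (t - s)))
        + lam2 * ((1 / (1 - α)) * ∫ s in (0:ℝ)..t, iteratedDeriv 3 T s * Real.exp (-(α / (1 - α)) * (t - s)))
        + ((m : ℝ) * π) ^ 2 * T t = fm t) :
    ∀ t : ℝ, 0 ≤ t →
      iteratedDeriv 3 (fun s => T s * Real.exp ((α / (1 - α)) * s)) t
        + (-3 * α / (1 - α) + lam1 / lam2) *
            iteratedDeriv 2 (fun s => T s * Real.exp ((α / (1 - α)) * s)) t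
        + (3 * (α / (1 - α)) ^ 2 +
            (lam0 - 2 * α * lam1 / (1 - α) + ((m : ℝ) * π) ^ 2 * (1 - α)) / lam2) *
            deriv (fun s => T s * Real.exp ((α / (1 - α)) * s)) t
        + (-(α / (1 - α)) ^ 3 +
            ((α / (1 - α)) ^ 2 * lam1 - (α / (1 - α)) * lam0) / lam2) *
            (T t * Real.exp ((α / (1 - α)) * t))
        = (1 / lam2) * (α * fm t + (1 - α) * deriv fm t) * Real.exp ((α / (1 - α)) * t) :=
  cf_three_term_reduction_general α hα1 m lam0 lam1 lam2 hlam2 T fm hT hf heq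
end

section
/- Let 0 < α < 1, λ₀, λ₁, λ₂ ∈ ℝ with λ₂ ≠ 0, q > 0, and m ∈ ℕ₊. Suppose f_m : [0,q] → ℝ is continuously differentiable. Then there is at most one function T : [0,q] → ℝ that is three times continuously differentiable, satisfies T(0) = T'(0) = T''(0) = 0, and solves Σ_{n=0}^{2} λ_n (CF D^{α+n} T)(t) + (mπ)² T(t) = f_m(t) on [0,q]. -/
/-!
The difference `D` of two solutions solves the homogeneous equation with `D(0) = D'(0) = D''(0) = 0`.
With `k = α/(1-α) ≥ 0`, integration by parts gives
`∫₀ᵗ D'''(s) e^{-k(t-s)} ds = D''(t) - k ∫₀ᵗ D''(s) e^{-k(t-s)} ds`,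
so, as `λ₂ ≠ 0`, the equation expresses `D''(t)` through `D(t)` and the kernel integrals of `D'` and `D''`.
Since `0 < e^{-k(t-s)} ≤ 1` and `D(0) = D'(0) = 0`, the function `u = |D| + |D'| + |D''|` then satisfies
`u(t) ≤ C ∫₀ᵗ u`, and Grönwall's inequality forces `u = 0`.
-/

open Real Set

/-- `(1 - α)⁻¹ • expConv (α / (1 - α)) (iteratedDeriv (n + 1) T)` is the Caputo–Fabrizio
derivative of order `α + n`. -/
noncomputable def expConv (k : ℝ) (g : ℝ → ℝ) (t : ℝ) : ℝ :=
  ∫ s in (0:ℝ)..t, g s * exp (-k * (t - s))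

section ExpConv

variable {k t : ℝ} {g h : ℝ → ℝ}

theorem expConv_sub (hg : Continuous g) (hh : Continuous h) :
    expConv k (g - h) t = expConv k g t - expConv k h t := by
  unfold expConv
  rw [← intervalIntegral.integral_sub (by apply Continuous.intervalIntegrable; fun_prop)
    (by apply Continuous.intervalIntegrable; fun_prop)]
  simp only [Pi.sub_apply, sub_mul]

theorem abs_expConv_le (hk : 0 ≤ k) (hg : Continuous g) (ht : 0 ≤ t) :
    |expConv k g t| ≤ ∫ s in (0:ℝ)..t, |g s| := by
  refine (intervalIntegral.abs_integral_le_integral_abs ht).trans <|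
    intervalIntegral.integral_mono_on ht (by apply Continuous.intervalIntegrable; fun_prop)
      (by apply Continuous.intervalIntegrable; fun_prop) fun s hs => ?_
  have hkernel : exp (-k * (t - s)) ≤ 1 := by
    rw [exp_le_one_iff, neg_mul, neg_nonpos]
    exact mul_nonneg hk (sub_nonneg.2 hs.2)
  rw [abs_mul, abs_of_pos (exp_pos _)]
  exact mul_le_of_le_one_right (abs_nonneg _) hkernel

theorem expConv_deriv_eq {g' : ℝ → ℝ} (hg : ∀ x, HasDerivAt g (g' x) x) (hg' : Continuous g')
    (h0 : g 0 = 0) : expConv k g' t = g t - k * expConv k g t := by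
  have hkernel : ∀ s, HasDerivAt (fun s => exp (-k * (t - s))) (exp (-k * (t - s)) * k) s :=
    fun s => by simpa using (((hasDerivAt_id s).const_sub t).const_mul (-k)).exp
  have hparts := intervalIntegral.integral_mul_deriv_eq_deriv_mul (fun s _ => hkernel s)
    (fun s _ => hg s) (by apply Continuous.intervalIntegrable; fun_prop)
    (hg'.intervalIntegrable 0 t)
  unfold expConv
  simp only [sub_self, mul_zero, exp_zero, one_mul, h0, sub_zero] at hparts
  rw [← intervalIntegral.integral_const_mul]
  simp only [mul_comm (g' _), hparts]
  congr 1
  exact intervalIntegral.integral_congr fun s _ => by ring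

end ExpConv

theorem abs_le_integral_abs_deriv {g g' : ℝ → ℝ} (hg : ∀ x, HasDerivAt g (g' x) x)
    (hg' : Continuous g') (h0 : g 0 = 0) {t : ℝ} (ht : 0 ≤ t) :
    |g t| ≤ ∫ s in (0:ℝ)..t, |g' s| := by
  have hftc := intervalIntegral.integral_eq_sub_of_hasDerivAt (fun x _ => hg x)
    (hg'.intervalIntegrable 0 t)
  rw [h0, sub_zero] at hftc
  exact hftc ▸ intervalIntegral.abs_integral_le_integral_abs ht

theorem eqOn_zero_of_le_mul_integral {u : ℝ → ℝ} {C q : ℝ} (hu : Continuous u)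
    (hu0 : ∀ t ∈ Icc 0 q, 0 ≤ u t) (h : ∀ t ∈ Icc 0 q, u t ≤ C * ∫ s in (0:ℝ)..t, u s) :
    ∀ t ∈ Icc 0 q, u t = 0 := by
  have hv : ∀ t, HasDerivAt (fun t => ∫ s in (0:ℝ)..t, u s) (u t) t :=
    fun t => (hu.integral_hasStrictDerivAt 0 t).hasDerivAt
  have hv0 : ∀ t ∈ Icc 0 q, 0 ≤ ∫ s in (0:ℝ)..t, u s := fun t ht =>
    intervalIntegral.integral_nonneg ht.1 fun s hs => hu0 s ⟨hs.1, hs.2.trans ht.2⟩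
  have hv_zero : ∀ t ∈ Icc 0 q, ∫ s in (0:ℝ)..t, u s = 0 :=
    eq_zero_of_abs_deriv_le_mul_abs_self_of_eq_zero_right
      (fun t _ => (hv t).continuousAt.continuousWithinAt) (fun t _ => (hv t).hasDerivWithinAt)
      intervalIntegral.integral_same fun t ht => by
        rw [norm_of_nonneg (hu0 t (Ico_subset_Icc_self ht)),
          norm_of_nonneg (hv0 t (Ico_subset_Icc_self ht))]
        exact h t (Ico_subset_Icc_self ht)
  intro t ht
  exact le_antisymm (by simpa [hv_zero t ht] using h t ht) (hu0 t ht)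

theorem ContDiff.hasDerivAt_iteratedDeriv {f : ℝ → ℝ} {n m : ℕ} (hf : ContDiff ℝ n f) (hm : m < n)
    (x : ℝ) : HasDerivAt (iteratedDeriv m f) (iteratedDeriv (m + 1) f x) x := by
  rw [iteratedDeriv_succ]
  exact (hf.differentiable_iteratedDeriv m (mod_cast hm) x).hasDerivAt

section ThreeTermEquation

variable {k q c lam0 lam1 lam2 : ℝ} {D : ℝ → ℝ}

theorem abs_mul_iteratedDeriv_two_le (hk : 0 ≤ k) (hD : ContDiff ℝ 3 D)
    (h2 : iteratedDeriv 2 D 0 = 0)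
    (heq : ∀ t ∈ Icc 0 q, lam0 * expConv k (iteratedDeriv 1 D) t
      + lam1 * expConv k (iteratedDeriv 2 D) t + lam2 * expConv k (iteratedDeriv 3 D) t
      + c * D t = 0) {t : ℝ} (ht : t ∈ Icc 0 q) :
    |lam2| * |iteratedDeriv 2 D t| ≤ |lam2 * k - lam1| * (∫ s in (0:ℝ)..t, |iteratedDeriv 2 D s|)
      + |lam0| * (∫ s in (0:ℝ)..t, |iteratedDeriv 1 D s|) + |c| * |D t| := by
  have hparts : expConv k (iteratedDeriv 3 D) t = iteratedDeriv 2 D t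
      - k * expConv k (iteratedDeriv 2 D) t :=
    expConv_deriv_eq (hD.hasDerivAt_iteratedDeriv (by norm_num))
      (hD.continuous_iteratedDeriv 3 le_rfl) h2
  have hD2 : lam2 * iteratedDeriv 2 D t = (lam2 * k - lam1) * expConv k (iteratedDeriv 2 D) t
      - lam0 * expConv k (iteratedDeriv 1 D) t - c * D t := by
    linear_combination heq t ht - lam2 * hparts
  rw [← abs_mul, hD2]
  calc _ ≤ |(lam2 * k - lam1) * expConv k (iteratedDeriv 2 D) t|
        + |lam0 * expConv k (iteratedDeriv 1 D) t| + |c * D t| :=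
        (abs_sub _ _).trans (by gcongr; exact abs_sub _ _)
    _ ≤ _ := by
        simp only [abs_mul]
        gcongr <;> exact abs_expConv_le hk (hD.continuous_iteratedDeriv _ (by norm_num)) ht.1

theorem eqOn_zero_of_expConv_eq_zero (hk : 0 ≤ k) (hlam2 : lam2 ≠ 0) (hD : ContDiff ℝ 3 D)
    (h0 : D 0 = 0) (h1 : iteratedDeriv 1 D 0 = 0) (h2 : iteratedDeriv 2 D 0 = 0)
    (heq : ∀ t ∈ Icc 0 q, lam0 * expConv k (iteratedDeriv 1 D) t
      + lam1 * expConv k (iteratedDeriv 2 D) t + lam2 * expConv k (iteratedDeriv 3 D) t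
      + c * D t = 0) :
    ∀ t ∈ Icc 0 q, D t = 0 := by
  have hcont : ∀ n ≤ 3, Continuous (iteratedDeriv n D) :=
    fun n hn => hD.continuous_iteratedDeriv n (mod_cast hn)
  set u : ℝ → ℝ := fun t => |D t| + |iteratedDeriv 1 D t| + |iteratedDeriv 2 D t| with hu_def
  have hu : Continuous u := by
    have := hcont 1 (by norm_num); have := hcont 2 (by norm_num); fun_prop
  have hle_u : ∀ n ≤ 2, ∀ t, 0 ≤ t →
      ∫ s in (0:ℝ)..t, |iteratedDeriv n D s| ≤ ∫ s in (0:ℝ)..t, u s :=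
    fun n hn t ht => intervalIntegral.integral_mono_on ht
      ((hcont n (by omega)).abs.intervalIntegrable 0 t) (hu.intervalIntegrable 0 t) fun s _ => by
        have := abs_nonneg (D s); have := abs_nonneg (iteratedDeriv 1 D s)
        have := abs_nonneg (iteratedDeriv 2 D s)
        interval_cases n <;> simp only [hu_def, iteratedDeriv_zero] <;> linarith
  have hbound : ∀ t ∈ Icc 0 q,
      u t ≤ (2 + (|lam2 * k - lam1| + |lam0| + |c|) / |lam2|) * ∫ s in (0:ℝ)..t, u s := by
    intro t ht
    set V := ∫ s in (0:ℝ)..t, u s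
    have hD0 : |D t| ≤ V := (abs_le_integral_abs_deriv (hD.hasDerivAt_iteratedDeriv
      (m := 0) (by norm_num)) (hcont 1 (by norm_num)) h0 ht.1).trans (hle_u 1 (by norm_num) t ht.1)
    have hD1 : |iteratedDeriv 1 D t| ≤ V := (abs_le_integral_abs_deriv
      (hD.hasDerivAt_iteratedDeriv (by norm_num)) (hcont 2 (by norm_num)) h1 ht.1).trans
      (hle_u 2 le_rfl t ht.1)
    have hD2 : |iteratedDeriv 2 D t| ≤ (|lam2 * k - lam1| + |lam0| + |c|) / |lam2| * V := by
      rw [div_mul_eq_mul_div, le_div_iff₀ (abs_pos.2 hlam2), mul_comm, add_mul, add_mul]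
      refine (abs_mul_iteratedDeriv_two_le hk hD h2 heq ht).trans ?_
      gcongr
      exacts [hle_u 2 le_rfl t ht.1, hle_u 1 (by norm_num) t ht.1]
    simp only [hu_def]
    linarith
  intro t ht
  have hu0 : u t = 0 :=
    eqOn_zero_of_le_mul_integral hu (fun t _ => by simp only [hu_def]; positivity) hbound t ht
  have := abs_nonneg (iteratedDeriv 1 D t); have := abs_nonneg (iteratedDeriv 2 D t)
  exact abs_nonpos_iff.1 (by simp only [hu_def] at hu0; linarith)

end ThreeTermEquation

theorem cf_three_term_uniqueness_general (α q : ℝ) (hα0 : 0 < α) (hα1 : α < 1)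
    (m : ℕ) (lam0 lam1 lam2 : ℝ) (hlam2 : lam2 ≠ 0)
    (fm : ℝ → ℝ) :
    ∀ T1 T2 : ℝ → ℝ,
      ContDiff ℝ 3 T1 → T1 0 = 0 → deriv T1 0 = 0 → iteratedDeriv 2 T1 0 = 0 →
      (∀ t ∈ Set.Icc (0:ℝ) q,
        lam0 * ((1 / (1 - α)) * ∫ s in (0:ℝ)..t, iteratedDeriv 1 T1 s * Real.exp (-(α / (1 - α)) * (t - s)))
          + lam1 * ((1 / (1 - α)) * ∫ s in (0:ℝ)..t, iteratedDeriv 2 T1 s * Real.exp (-(α / (1 - α)) * (t - s)))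
          + lam2 * ((1 / (1 - α)) * ∫ s in (0:ℝ)..t, iteratedDeriv 3 T1 s * Real.exp (-(α / (1 - α)) * (t - s)))
          + ((m : ℝ) * π) ^ 2 * T1 t = fm t) →
      ContDiff ℝ 3 T2 → T2 0 = 0 → deriv T2 0 = 0 → iteratedDeriv 2 T2 0 = 0 →
      (∀ t ∈ Set.Icc (0:ℝ) q,
        lam0 * ((1 / (1 - α)) * ∫ s in (0:ℝ)..t, iteratedDeriv 1 T2 s * Real.exp (-(α / (1 - α)) * (t - s)))
          + lam1 * ((1 / (1 - α)) * ∫ s in (0:ℝ)..t, iteratedDeriv 2 T2 s * Real.exp (-(α / (1 - α)) * (t - s)))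
          + lam2 * ((1 / (1 - α)) * ∫ s in (0:ℝ)..t, iteratedDeriv 3 T2 s * Real.exp (-(α / (1 - α)) * (t - s)))
          + ((m : ℝ) * π) ^ 2 * T2 t = fm t) →
      ∀ t ∈ Set.Icc (0:ℝ) q, T1 t = T2 t := by
  intro T1 T2 hT1 h10 h11 h12 heq1 hT2 h20 h21 h22 heq2
  have hk : 0 ≤ α / (1 - α) := div_nonneg hα0.le (sub_nonneg.2 hα1.le)
  have hsub : ∀ n ≤ 3, iteratedDeriv n (T1 - T2) = iteratedDeriv n T1 - iteratedDeriv n T2 :=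
    fun n hn => funext fun x => iteratedDeriv_sub ((hT1.of_le (mod_cast hn)).contDiffAt)
      ((hT2.of_le (mod_cast hn)).contDiffAt)
  have hconv : ∀ n ≤ 3, ∀ t, expConv (α / (1 - α)) (iteratedDeriv n (T1 - T2)) t
      = expConv (α / (1 - α)) (iteratedDeriv n T1) t - expConv (α / (1 - α)) (iteratedDeriv n T2) t :=
    fun n hn t => by
      rw [hsub n hn, expConv_sub (hT1.continuous_iteratedDeriv n (mod_cast hn))
        (hT2.continuous_iteratedDeriv n (mod_cast hn))]
  -- the factor `1 / (1 - α)` is absorbed into the coefficients `lam0`, `lam1`, `lam2`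
  refine fun t ht => sub_eq_zero.1 <| eqOn_zero_of_expConv_eq_zero (lam0 := lam0 / (1 - α))
    (lam1 := lam1 / (1 - α)) (c := ((m : ℝ) * π) ^ 2) (D := T1 - T2) hk
    (div_ne_zero hlam2 (sub_ne_zero.2 hα1.ne')) (hT1.sub hT2) (by simp [h10, h20])
    (by rw [hsub 1 (by norm_num), Pi.sub_apply, iteratedDeriv_one, iteratedDeriv_one, h11, h21,
      sub_self]) (by simp [hsub 2 (by norm_num), h12, h22])
    (fun τ hτ => ?_) t ht
  rw [hconv 1 (by norm_num), hconv 2 (by norm_num), hconv 3 le_rfl, Pi.sub_apply]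
  unfold expConv
  linear_combination heq1 τ hτ - heq2 τ hτ

theorem cf_three_term_uniqueness (α q : ℝ) (hα0 : 0 < α) (hα1 : α < 1) (hq : 0 < q)
    (m : ℕ) (hm : 0 < m) (lam0 lam1 lam2 : ℝ) (hlam2 : lam2 ≠ 0)
    (fm : ℝ → ℝ) (hf : ContDiff ℝ 1 fm) :
    ∀ T1 T2 : ℝ → ℝ,
      ContDiff ℝ 3 T1 → T1 0 = 0 → deriv T1 0 = 0 → iteratedDeriv 2 T1 0 = 0 →
      (∀ t ∈ Set.Icc (0:ℝ) q,
        lam0 * ((1 / (1 - α)) * ∫ s in (0:ℝ)..t, iteratedDeriv 1 T1 s * Real.exp (-(α / (1 - α)) * (t - s)))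
          + lam1 * ((1 / (1 - α)) * ∫ s in (0:ℝ)..t, iteratedDeriv 2 T1 s * Real.exp (-(α / (1 - α)) * (t - s)))
          + lam2 * ((1 / (1 - α)) * ∫ s in (0:ℝ)..t, iteratedDeriv 3 T1 s * Real.exp (-(α / (1 - α)) * (t - s)))
          + ((m : ℝ) * π) ^ 2 * T1 t = fm t) →
      ContDiff ℝ 3 T2 → T2 0 = 0 → deriv T2 0 = 0 → iteratedDeriv 2 T2 0 = 0 →
      (∀ t ∈ Set.Icc (0:ℝ) q,
        lam0 * ((1 / (1 - α)) * ∫ s in (0:ℝ)..t, iteratedDeriv 1 T2 s * Real.exp (-(α / (1 - α)) * (t - s)))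
          + lam1 * ((1 / (1 - α)) * ∫ s in (0:ℝ)..t, iteratedDeriv 2 T2 s * Real.exp (-(α / (1 - α)) * (t - s)))
          + lam2 * ((1 / (1 - α)) * ∫ s in (0:ℝ)..t, iteratedDeriv 3 T2 s * Real.exp (-(α / (1 - α)) * (t - s)))
          + ((m : ℝ) * π) ^ 2 * T2 t = fm t) →
      ∀ t ∈ Set.Icc (0:ℝ) q, T1 t = T2 t :=
  cf_three_term_uniqueness_general α q hα0 hα1 m lam0 lam1 lam2 hlam2 fm
end
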